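/- arXiv:2004.01493 — 2 statements merged into one kernel-verified Lean document; each statement's English description precedes it below -/
import Mathlib

section
/- For every i ∈ {2,…,n} with L[i] = L[i−1], it holds that LCP[LF(i)] = LCP[i] + 1. -/
/-- 1-based access to the `i`-th character of `T`. -/
def idx (T : List ℕ) (i : ℕ) : ℕ := T.getD (i - 1) 0

/-- The suffix `T[i..n]` (1-based). -/
def sufx (T : List ℕ) (i : ℕ) : List ℕ := T.drop (i - 1)

/-- Occurrence positions of `P` in `T`: `Occ(T,P) = {i ∈ [1, n−|P|+1] : P = T[i..i+|P|−1]}`. -/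
def OccF (T P : List ℕ) : Finset ℕ :=
  (Finset.Icc 1 (T.length - P.length + 1)).filter (fun i => P <+: T.drop (i - 1))

/-- `children(P) = {Pc : c ∈ Σ, Pc is a substring of T}`. -/
def childrenSet (σ : ℕ) (T P : List ℕ) : Set (List ℕ) :=
  {Q | ∃ c ∈ Finset.Icc 1 σ, Q = P ++ [c] ∧ (P ++ [c]) <:+: T}

/-- Starting positions of the maximal runs of equal characters in `L[1..n]`. -/
def SstartSet (n : ℕ) (L : ℕ → ℕ) : Finset ℕ :=
  (Finset.Icc 1 n).filter (fun i => i = 1 ∨ L i ≠ L (i - 1))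

/-- `rank(S, i) = |{j ∈ S : j ≤ i}|`. -/
def rankOf (S : Finset ℕ) (i : ℕ) : ℕ := (S.filter (fun j => j ≤ i)).card

/-- `(c, p, q)` is an answer of the range distinct query `RD(S, b, e)`:
`c` occurs in `S[b..e]`, and `p`, `q` are the first and last occurrences of `c` in `[b,e]`. -/
def RDmem (S : ℕ → ℕ) (b e c p q : ℕ) : Prop :=
  p ∈ Finset.Icc b e ∧ S p = c ∧ (∀ i ∈ Finset.Icc b e, S i = c → p ≤ i) ∧
  q ∈ Finset.Icc b e ∧ S q = c ∧ (∀ i ∈ Finset.Icc b e, S i = c → i ≤ q)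

/-- `[b,e]` is the suffix-tree interval of `P`: the positions `i ∈ [1,n]` whose suffix
`T[SA[i]..n]` has `P` as a prefix are exactly `{b,…,e}`. -/
def isIntervalOf (n : ℕ) (T : List ℕ) (SA : ℕ → ℕ) (P : List ℕ) (b e : ℕ) : Prop :=
  1 ≤ b ∧ e ≤ n ∧ ∀ i ∈ Finset.Icc 1 n, (P <+: sufx T (SA i) ↔ i ∈ Finset.Icc b e)

/-- Length of the longest common prefix of two lists. -/
def lcpLen : List ℕ → List ℕ → ℕ
  | a :: as, b :: bs => if a = b then lcpLen as bs + 1 else 0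
  | _, _ => 0

/-- `𝓛_t`: substrings of `T` of length `t` whose suffix-tree node is explicit. -/
def LsetD (σ t : ℕ) (T : List ℕ) : Set (List ℕ) :=
  {P | P <:+: T ∧ P.length = t ∧ 2 ≤ (childrenSet σ T P).ncard}

/-- `K_t = ⋃_{P ∈ 𝓛_t} children(P)`. -/
def KsetD (σ t : ℕ) (T : List ℕ) : Set (List ℕ) :=
  {Q | ∃ P ∈ LsetD σ t T, Q ∈ childrenSet σ T P}

/-- `K'_t`: members of `K_t` that are not the last child of their parent, i.e. whose
interval has a right endpoint different from that of the parent's interval. -/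
def KpsetD (σ n t : ℕ) (T : List ℕ) (SA : ℕ → ℕ) : Set (List ℕ) :=
  {Q | ∃ P ∈ LsetD σ t T, Q ∈ childrenSet σ T P ∧
    ∃ b e b' e' : ℕ, isIntervalOf n T SA P b e ∧ isIntervalOf n T SA Q b' e' ∧ e' ≠ e}



lemma lex_irrefl (l : List ℕ) : ¬ List.Lex (· < ·) l l := by
  induction l with
  | nil => intro h; cases h
  | cons a l ih =>
    intro h
    cases h with
    | cons h => exact ih h
    | rel h => exact lt_irrefl a h

lemma sufx_cons (T : List ℕ) (j : ℕ) (h1 : 1 ≤ j) (h2 : j ≤ T.length) :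
    sufx T j = idx T j :: sufx T (j + 1) := by
  unfold sufx idx
  have hlt : j - 1 < T.length := by omega
  have e : j + 1 - 1 = j - 1 + 1 := by omega
  rw [e, List.drop_eq_getElem_cons hlt, List.getD_eq_getElem T 0 hlt]

theorem stmt3
    (σ n : ℕ) (T : List ℕ)
    (hn : 2 ≤ n) (hlen : T.length = n)
    (halpha : ∀ c ∈ T, c ∈ Finset.Icc 1 σ)
    (hocc : ∀ c ∈ Finset.Icc 1 σ, c ∈ T)
    (hdollar : ∀ i ∈ Finset.Icc 1 (n - 1), idx T i ≠ idx T n)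
    (SA : ℕ → ℕ)
    (hSA_mem : ∀ i ∈ Finset.Icc 1 n, SA i ∈ Finset.Icc 1 n)
    (hSA_surj : ∀ j ∈ Finset.Icc 1 n, ∃ i ∈ Finset.Icc 1 n, SA i = j)
    (hSA_sorted : ∀ i j, i ∈ Finset.Icc 1 n → j ∈ Finset.Icc 1 n → i < j →
      List.Lex (· < ·) (sufx T (SA i)) (sufx T (SA j)))
    (LF : ℕ → ℕ)
    (hLF_mem : ∀ i ∈ Finset.Icc 1 n, LF i ∈ Finset.Icc 1 n)
    (hLF : ∀ i ∈ Finset.Icc 1 n, SA i ≠ 1 → SA (LF i) = SA i - 1)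
    (hLF1 : ∀ i ∈ Finset.Icc 1 n, SA i = 1 → SA (LF i) = n)
    (L : ℕ → ℕ)
    (hL : ∀ i ∈ Finset.Icc 1 n, L i = idx T (SA (LF i)))
    (LCP : ℕ → ℕ)
    (hLCP1 : LCP 1 = 0)
    (hLCP : ∀ i ∈ Finset.Icc 2 n, LCP i = lcpLen (sufx T (SA (i - 1))) (sufx T (SA i)))
 :
    ∀ i ∈ Finset.Icc 2 n, L i = L (i - 1) → LCP (LF i) = LCP i + 1 := by
  intro i hi hLL
  simp only [Finset.mem_Icc] at hi
  obtain ⟨hi2, hin⟩ := hi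
  have hiM : i ∈ Finset.Icc 1 n := Finset.mem_Icc.mpr ⟨by omega, hin⟩
  have hi1M : i - 1 ∈ Finset.Icc 1 n := Finset.mem_Icc.mpr ⟨by omega, by omega⟩
  have hSAj_bds : ∀ j, j ∈ Finset.Icc 1 n → 1 ≤ SA j ∧ SA j ≤ n :=
    fun j hj => Finset.mem_Icc.mp (hSA_mem j hj)
  have hSAinj : ∀ a b, a ∈ Finset.Icc 1 n → b ∈ Finset.Icc 1 n → SA a = SA b → a = b := by
    intro a b ha hb h
    by_contra hne
    rcases lt_or_gt_of_ne hne with h' | h'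
    · have hx := hSA_sorted a b ha hb h'
      rw [h] at hx
      exact lex_irrefl _ hx
    · have hx := hSA_sorted b a hb ha h'
      rw [h] at hx
      exact lex_irrefl _ hx
  have horder : ∀ a b, a ∈ Finset.Icc 1 n → b ∈ Finset.Icc 1 n →
      (a < b ↔ sufx T (SA a) < sufx T (SA b)) := by
    intro a b ha hb
    constructor
    · exact fun h => hSA_sorted a b ha hb h
    · intro h
      rcases lt_trichotomy a b with h' | h' | h'
      · exact h'
      · subst h'; exact absurd h (lt_irrefl _)
      · exact absurd (hSA_sorted b a hb ha h' : sufx T (SA b) < sufx T (SA a)) (lt_asymm h)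
  have hLval : ∀ j, j ∈ Finset.Icc 1 n → SA j ≠ 1 → L j = idx T (SA j - 1) := by
    intro j hj h1
    rw [hL j hj, hLF j hj h1]
  have hLdollar : ∀ j, j ∈ Finset.Icc 1 n → SA j = 1 → L j = idx T n := by
    intro j hj h1
    rw [hL j hj, hLF1 j hj h1]
  have hSAi1 : SA i ≠ 1 := by
    intro h1
    have h2 : SA (i - 1) ≠ 1 := by
      intro h2
      have := hSAinj i (i - 1) hiM hi1M (by rw [h1, h2])
      omega
    have hA := hLdollar i hiM h1
    have hB := hLval (i - 1) hi1M h2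
    have hb := hSAj_bds (i - 1) hi1M
    have hm : SA (i - 1) - 1 ∈ Finset.Icc 1 (n - 1) := Finset.mem_Icc.mpr (by omega)
    exact hdollar _ hm (by rw [← hB, ← hLL, hA])
  have hSAi1' : SA (i - 1) ≠ 1 := by
    intro h2
    have hA := hLdollar (i - 1) hi1M h2
    have hB := hLval i hiM hSAi1
    have hb := hSAj_bds i hiM
    have hm : SA i - 1 ∈ Finset.Icc 1 (n - 1) := Finset.mem_Icc.mpr (by omega)
    exact hdollar _ hm (by rw [← hB, hLL, hA])
  set c := L i with hc
  have hci : c = idx T (SA i - 1) := hLval i hiM hSAi1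
  have hci1 : c = idx T (SA (i - 1) - 1) := by
    have h := hLval (i - 1) hi1M hSAi1'
    rw [← hLL] at h
    exact h
  have hSAiB := hSAj_bds i hiM
  have hSAi1B := hSAj_bds (i - 1) hi1M
  have hsufi : sufx T (SA i - 1) = c :: sufx T (SA i) := by
    have h := sufx_cons T (SA i - 1) (by omega) (by rw [hlen]; omega)
    have e : SA i - 1 + 1 = SA i := by omega
    rw [h, e, ← hci]
  have hsufi1 : sufx T (SA (i - 1) - 1) = c :: sufx T (SA (i - 1)) := by
    have h := sufx_cons T (SA (i - 1) - 1) (by omega) (by rw [hlen]; omega)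
    have e : SA (i - 1) - 1 + 1 = SA (i - 1) := by omega
    rw [h, e, ← hci1]
  have hLFiM := hLF_mem i hiM
  have hLFi1M := hLF_mem (i - 1) hi1M
  have hSALFi : SA (LF i) = SA i - 1 := hLF i hiM hSAi1
  have hSALFi1 : SA (LF (i - 1)) = SA (i - 1) - 1 := hLF (i - 1) hi1M hSAi1'
  have hlt0 : sufx T (SA (i - 1)) < sufx T (SA i) := (horder (i - 1) i hi1M hiM).mp (by omega)
  have hlt1 : sufx T (SA (LF (i - 1))) < sufx T (SA (LF i)) := by
    rw [hSALFi, hSALFi1, hsufi, hsufi1]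
    exact List.Lex.cons hlt0
  have hLFlt : LF (i - 1) < LF i := (horder _ _ hLFi1M hLFiM).mpr hlt1
  have hLFiB := Finset.mem_Icc.mp hLFiM
  have hLFi1B := Finset.mem_Icc.mp hLFi1M
  have hLFinj : ∀ a b, a ∈ Finset.Icc 1 n → b ∈ Finset.Icc 1 n → LF a = LF b → a = b := by
    intro a b ha hb h
    have haB := hSAj_bds a ha
    have hbB := hSAj_bds b hb
    by_cases h1 : SA a = 1
    · by_cases h2 : SA b = 1
      · exact hSAinj a b ha hb (h1.trans h2.symm)
      · have ea := hLF1 a ha h1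
        have eb := hLF b hb h2
        rw [h] at ea
        omega
    · by_cases h2 : SA b = 1
      · have ea := hLF a ha h1
        have eb := hLF1 b hb h2
        rw [h] at ea
        omega
      · have ea := hLF a ha h1
        have eb := hLF b hb h2
        rw [h] at ea
        exact hSAinj a b ha hb (by omega)
  have hLFsurj : ∀ k ∈ Finset.Icc 1 n, ∃ j ∈ Finset.Icc 1 n, LF j = k := by
    intro k hk
    obtain ⟨a, ha, hEq⟩ := Finset.surj_on_of_inj_on_of_card_le
      (s := Finset.Icc 1 n) (t := Finset.Icc 1 n)
      (fun a _ => LF a) (fun a ha => hLF_mem a ha)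
      (fun a b ha hb h => hLFinj a b ha hb h) le_rfl k hk
    exact ⟨a, ha, hEq.symm⟩
  have hstep : LF i = LF (i - 1) + 1 := by
    by_contra hne
    set k := LF (i - 1) + 1 with hk
    have hkM : k ∈ Finset.Icc 1 n := Finset.mem_Icc.mpr ⟨by omega, by omega⟩
    obtain ⟨j, hjM, hLFj⟩ := hLFsurj k hkM
    have hklt : k < LF i := by omega
    have hL1 : sufx T (SA (LF (i - 1))) < sufx T (SA k) := (horder _ _ hLFi1M hkM).mp (by omega)
    have hL2 : sufx T (SA k) < sufx T (SA (LF i)) := (horder _ _ hkM hLFiM).mp hklt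
    rw [← hLFj] at hL1 hL2
    have hSAjne : SA j ≠ 1 := by
      intro h1
      have e := hLF1 j hjM h1
      rw [e] at hL1 hL2
      have hend : sufx T n = [idx T n] := by
        have h := sufx_cons T n (by omega) (by omega)
        have h2 : sufx T (n + 1) = [] := by
          unfold sufx
          have e2 : n + 1 - 1 = T.length := by omega
          rw [e2, List.drop_length]
        rw [h, h2]
      rw [hend, hSALFi1, hsufi1] at hL1
      rw [hend, hSALFi, hsufi] at hL2
      have h1' : c ≤ idx T n := List.head_le_of_lt hL1
      have h2' : idx T n ≤ c := List.head_le_of_lt hL2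
      have heq : idx T (SA i - 1) = idx T n := by rw [← hci]; omega
      exact hdollar (SA i - 1) (Finset.mem_Icc.mpr (by omega)) heq
    have hSAjB := hSAj_bds j hjM
    have e := hLF j hjM hSAjne
    have hsufj : sufx T (SA j - 1) = L j :: sufx T (SA j) := by
      have h := sufx_cons T (SA j - 1) (by omega) (by rw [hlen]; omega)
      have e2 : SA j - 1 + 1 = SA j := by omega
      rw [h, e2, ← hLval j hjM hSAjne]
    rw [e, hsufj, hSALFi1, hsufi1] at hL1
    rw [e, hsufj, hSALFi, hsufi] at hL2
    have h1' : c ≤ L j := List.head_le_of_lt hL1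
    have h2' : L j ≤ c := List.head_le_of_lt hL2
    have hLj : L j = c := le_antisymm h2' h1'
    rw [hLj] at hL1 hL2
    have t1 : sufx T (SA (i - 1)) < sufx T (SA j) := by
      cases hL1 with
      | cons h => exact h
      | rel h => exact absurd h (lt_irrefl c)
    have t2 : sufx T (SA j) < sufx T (SA i) := by
      cases hL2 with
      | cons h => exact h
      | rel h => exact absurd h (lt_irrefl c)
    have j1 : i - 1 < j := (horder _ _ hi1M hjM).mpr t1
    have j2 : j < i := (horder _ _ hjM hiM).mpr t2
    omega
  have hLFiIcc : LF i ∈ Finset.Icc 2 n := Finset.mem_Icc.mpr ⟨by omega, hLFiB.2⟩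
  rw [hLCP (LF i) hLFiIcc, hLCP i (Finset.mem_Icc.mpr ⟨hi2, hin⟩)]
  have e : LF i - 1 = LF (i - 1) := by omega
  rw [e, hSALFi, hSALFi1, hsufi, hsufi1]
  simp [lcpLen]
end

section
/- For every integer t ≥ 0, |K_t| ≤ 2r, where r is the number of maximal runs of equal characters in the BWT L of T; in particular max{|K_0|, |K_1|, …, |K_n|} ≤ 2r. -/
theorem List.IsPrefix.of_lt_of_lt {α : Type*} [LinearOrder α] :
    ∀ {Q x y z : List α}, Q <+: x → Q <+: z → x < y → y < z → Q <+: y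
  | [], _, _, _, _, _, _, _ => List.nil_prefix
  | _ :: _, [], _, _, hx, _, _, _ => absurd hx (by simp)
  | _ :: _, _ :: _, _, [], _, hz, _, _ => absurd hz (by simp)
  | _ :: _, _ :: _, [], _ :: _, _, _, hxy, _ => absurd hxy (List.not_lt_nil _)
  | q :: _, a :: _, b :: _, c :: _, hx, hz, hxy, hyz => by
    obtain ⟨rfl, hx'⟩ := List.cons_prefix_cons.mp hx
    obtain ⟨rfl, hz'⟩ := List.cons_prefix_cons.mp hz
    rw [List.cons_lt_cons_iff] at hxy hyz
    rcases hxy with hab | ⟨rfl, hxy⟩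
    · rcases hyz with hba | ⟨rfl, _⟩
      · exact absurd (hab.trans hba) (lt_irrefl _)
      · exact absurd hab (lt_irrefl _)
    · rcases hyz with hba | ⟨-, hyz⟩
      · exact absurd hba (lt_irrefl _)
      · exact List.cons_prefix_cons.mpr ⟨rfl, hx'.of_lt_of_lt hz' hxy hyz⟩

theorem Nat.exists_not_iff_pred_of_not_iff {p : ℕ → Prop} {a b : ℕ} (hab : a ≤ b)
    (h : ¬(p a ↔ p b)) : ∃ j, a < j ∧ j ≤ b ∧ ¬(p (j - 1) ↔ p j) := by
  induction b, hab using Nat.le_induction with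
  | base => exact absurd Iff.rfl h
  | succ b hab ih =>
    by_cases hb : p a ↔ p b
    · exact ⟨b + 1, by omega, le_rfl, fun h' => h (hb.trans h')⟩
    · obtain ⟨j, h1, h2, h3⟩ := ih hb
      exact ⟨j, h1, by omega, h3⟩

theorem le_lcpLen_iff {k : ℕ} {x y : List ℕ} :
    k ≤ lcpLen x y ↔ ∃ P : List ℕ, P.length = k ∧ P <+: x ∧ P <+: y := by
  induction x generalizing y k with
  | nil => simp [lcpLen, List.prefix_nil, eq_comm]
  | cons a x ih =>
    rcases y with _ | ⟨b, y⟩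
    · simp [lcpLen, List.prefix_nil, eq_comm]
    rcases k with _ | k
    · exact iff_of_true (Nat.zero_le _) ⟨[], rfl, List.nil_prefix, List.nil_prefix⟩
    constructor
    · intro hk
      by_cases hab : a = b
      · subst hab
        simp only [lcpLen, if_true] at hk
        obtain ⟨P, hP, hx, hy⟩ := (ih (k := k) (y := y)).mp (by omega)
        exact ⟨a :: P, by simp [hP], List.cons_prefix_cons.mpr ⟨rfl, hx⟩,
          List.cons_prefix_cons.mpr ⟨rfl, hy⟩⟩
      · simp [lcpLen, hab] at hk
    · rintro ⟨_ | ⟨c, P⟩, hP, hx, hy⟩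
      · simp at hP
      obtain ⟨rfl, hPx⟩ := List.cons_prefix_cons.mp hx
      obtain ⟨rfl, hPy⟩ := List.cons_prefix_cons.mp hy
      simp only [lcpLen, if_true, List.length_cons] at hP ⊢
      exact Nat.succ_le_succ (ih.mpr ⟨P, by omega, hPx, hPy⟩)

theorem lcpLen_cons_cons (a : ℕ) (x y : List ℕ) : lcpLen (a :: x) (a :: y) = lcpLen x y + 1 := by
  simp [lcpLen]

theorem lcpLen_eq_of_prefix {P Q x y : List ℕ} (hx : P <+: x) (hy : P <+: y)
    (hQ : Q.length = P.length + 1) (hQxy : ¬(Q <+: x ↔ Q <+: y)) : lcpLen x y = P.length := by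
  refine le_antisymm ?_ (le_lcpLen_iff.mpr ⟨P, rfl, hx, hy⟩)
  by_contra! hlt
  obtain ⟨R, hR, hRx, hRy⟩ := le_lcpLen_iff.mp (Nat.succ_le_of_lt hlt)
  have hQR {z : List ℕ} (hRz : R <+: z) (hQz : Q <+: z) : Q = R :=
    by rw [List.prefix_iff_eq_take.mp hQz, List.prefix_iff_eq_take.mp hRz, hQ, hR]
  exact hQxy ⟨fun hQx => hQR hRx hQx ▸ hRy, fun hQy => hQR hRy hQy ▸ hRx⟩

section Descent

variable {α : Type*} {D : Finset α} {f : α → α} {w lev : α → ℕ} {halt : α → Prop}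

theorem iterate_mem_of_step
    (hstep : ∀ i ∈ D, ¬halt i → f i ∈ D ∧ w (f i) + 1 = w i ∧ lev (f i) = lev i + 1)
    {i : α} (hi : i ∈ D) :
    ∀ k, (∀ m < k, ¬halt (f^[m] i)) →
      f^[k] i ∈ D ∧ w (f^[k] i) + k = w i ∧ lev (f^[k] i) = lev i + k
  | 0, _ => ⟨hi, rfl, rfl⟩
  | k + 1, hk => by
    obtain ⟨hD, hw, hlev⟩ := iterate_mem_of_step hstep hi k fun m hm => hk m (by omega)
    obtain ⟨hD', hw', hlev'⟩ := hstep _ hD (hk k (by omega))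
    rw [Function.iterate_succ_apply']
    exact ⟨hD', by omega, by omega⟩

theorem card_filter_eq_le_card_filter_halt [DecidablePred halt] (hw : Set.InjOn w D)
    (hstep : ∀ i ∈ D, ¬halt i → f i ∈ D ∧ w (f i) + 1 = w i ∧ lev (f i) = lev i + 1)
    (t : ℕ) : (D.filter (lev · = t)).card ≤ (D.filter halt).card := by
  set N : α → ℕ := fun i => sInf {k | halt (f^[k] i)}
  have hN {i : α} (hi : i ∈ D) :
      halt (f^[N i] i) ∧ f^[N i] i ∈ D ∧ w (f^[N i] i) + N i = w i ∧
        lev (f^[N i] i) = lev i + N i := by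
    have hne : {k | halt (f^[k] i)}.Nonempty := by
      by_contra! hempty
      have := (iterate_mem_of_step hstep hi (w i + 1) fun m _ hm =>
        (Set.eq_empty_iff_forall_notMem.mp hempty m) hm).2.1
      omega
    exact ⟨Nat.sInf_mem hne, iterate_mem_of_step hstep hi (N i) fun m hm =>
      Nat.notMem_of_lt_sInf hm⟩
  refine Finset.card_le_card_of_injOn (fun i => f^[N i] i) (fun i hi => ?_) fun i hi j hj hij => ?_
  · obtain ⟨hhalt, hD, -⟩ := hN (Finset.mem_filter.mp hi).1
    exact Finset.mem_filter.mpr ⟨hD, hhalt⟩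
  · obtain ⟨hiD, rfl⟩ := Finset.mem_filter.mp hi
    obtain ⟨hjD, hlevj⟩ := Finset.mem_filter.mp hj
    obtain ⟨-, -, hwi, hlevi⟩ := hN hiD
    obtain ⟨-, -, hwj, hlevj'⟩ := hN hjD
    simp only at hij
    have hNij : N i = N j := by rw [hij] at hlevi; omega
    exact hw hiD hjD (by rw [hij, hNij] at hwi; omega)

end Descent

theorem StrictMonoOn.prefix_of_le_of_le {α β : Type*} [LinearOrder α] [PartialOrder β]
    {s : β → List α} {I : Set β} (hs : StrictMonoOn s I) {a b c : β} (ha : a ∈ I) (hb : b ∈ I)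
    (hc : c ∈ I) (hab : a ≤ b) (hbc : b ≤ c) {Q : List α} (hQa : Q <+: s a) (hQc : Q <+: s c) :
    Q <+: s b := by
  rcases hab.eq_or_lt with rfl | hab
  · exact hQa
  rcases hbc.eq_or_lt with rfl | hbc
  · exact hQc
  exact hQa.of_lt_of_lt hQc (hs ha hb hab) (hs hb hc hbc)

theorem exists_prefix_sufx_of_infix {S T : List ℕ} (hS : S ≠ []) (h : S <:+: T) :
    ∃ p, 1 ≤ p ∧ p ≤ T.length ∧ S <+: sufx T p := by
  obtain ⟨U, hSU, hUT⟩ := List.infix_iff_prefix_suffix.mp h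
  obtain ⟨k, rfl⟩ : ∃ k, U = T.drop k := ⟨_, List.suffix_iff_eq_drop.mp hUT⟩
  have hk : k < T.length := by
    by_contra! hk
    rw [List.drop_eq_nil_of_le hk, List.prefix_nil] at hSU
    exact hS hSU
  exact ⟨k + 1, by omega, by omega, by simpa [sufx] using hSU⟩

theorem sufx_eq_cons {T : List ℕ} {p : ℕ} (h1 : 1 ≤ p) (h2 : p ≤ T.length) :
    sufx T p = idx T p :: sufx T (p + 1) := by
  obtain ⟨q, rfl⟩ : ∃ q, p = q + 1 := ⟨p - 1, by omega⟩
  have hq : q < T.length := by omega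
  simp only [sufx, idx, Nat.add_sub_cancel]
  rw [List.getD_eq_getElem _ _ hq, List.drop_eq_getElem_cons hq]

def lcpArray (T : List ℕ) (SA : ℕ → ℕ) (i : ℕ) : ℕ :=
  lcpLen (sufx T (SA (i - 1))) (sufx T (SA i))

section SuffixArray

variable {n : ℕ} {T : List ℕ} {SA LF L : ℕ → ℕ}

theorem exists_row_of_infix (hlen : T.length = n)
    (hSA_surj : ∀ j ∈ Finset.Icc 1 n, ∃ i ∈ Finset.Icc 1 n, SA i = j)
    {S : List ℕ} (hS : S ≠ []) (h : S <:+: T) : ∃ i ∈ Finset.Icc 1 n, S <+: sufx T (SA i) := by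
  obtain ⟨p, hp1, hpn, hSp⟩ := exists_prefix_sufx_of_infix hS h
  obtain ⟨i, hi, rfl⟩ := hSA_surj p (Finset.mem_Icc.mpr ⟨hp1, hlen ▸ hpn⟩)
  exact ⟨i, hi, hSp⟩

theorem KsetD_subset_biUnion {σ : ℕ} (hlen : T.length = n)
    (hSA_surj : ∀ j ∈ Finset.Icc 1 n, ∃ i ∈ Finset.Icc 1 n, SA i = j)
    (hsorted : StrictMonoOn (fun i => sufx T (SA i)) ↑(Finset.Icc 1 n)) (t : ℕ) :
    KsetD σ t T ⊆ ↑(((Finset.Icc 2 n).filter (lcpArray T SA · = t)).biUnion fun j =>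
      {(sufx T (SA (j - 1))).take (t + 1), (sufx T (SA j)).take (t + 1)}) := by
  rintro Q ⟨P, ⟨-, hPlen, hPch⟩, c, -, rfl, hQT⟩
  obtain ⟨Q', ⟨c', -, rfl, hQ'T⟩, hne⟩ := Set.exists_ne_of_one_lt_ncard hPch (P ++ [c])
  obtain ⟨x, hx, hQx⟩ := exists_row_of_infix hlen hSA_surj (by simp) hQT
  obtain ⟨m, hm, hQ'm⟩ := exists_row_of_infix hlen hSA_surj (by simp) hQ'T
  have hQm : ¬(P ++ [c] <+: sufx T (SA m)) := fun hQm =>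
    hne ((List.prefix_of_prefix_length_le hQ'm hQm (by simp)).eq_of_length (by simp))
  have key : ∀ a ∈ Finset.Icc 1 n, ∀ b ∈ Finset.Icc 1 n, a ≤ b → P <+: sufx T (SA a) →
      P <+: sufx T (SA b) → ¬(P ++ [c] <+: sufx T (SA a) ↔ P ++ [c] <+: sufx T (SA b)) →
      P ++ [c] ∈ ((Finset.Icc 2 n).filter (lcpArray T SA · = t)).biUnion fun j =>
        {(sufx T (SA (j - 1))).take (t + 1), (sufx T (SA j)).take (t + 1)} := by
    intro a ha b hb hab hPa hPb hQab
    obtain ⟨j, haj, hjb, hj⟩ :=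
      Nat.exists_not_iff_pred_of_not_iff (p := fun i => P ++ [c] <+: sufx T (SA i)) hab hQab
    rw [Finset.mem_Icc] at ha hb
    have hj1 : j - 1 ∈ Finset.Icc 1 n := Finset.mem_Icc.mpr ⟨by omega, by omega⟩
    have hj' : j ∈ Finset.Icc 1 n := Finset.mem_Icc.mpr ⟨by omega, by omega⟩
    have hPj1 := hsorted.prefix_of_le_of_le (Finset.mem_Icc.mpr ha) hj1 (Finset.mem_Icc.mpr hb)
      (by omega) (by omega) hPa hPb
    have hPj := hsorted.prefix_of_le_of_le (Finset.mem_Icc.mpr ha) hj' (Finset.mem_Icc.mpr hb)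
      (by omega) hjb hPa hPb
    have hlcp : lcpArray T SA j = t := hPlen ▸ lcpLen_eq_of_prefix hPj1 hPj (by simp) hj
    have htake {z : List ℕ} (hz : P ++ [c] <+: z) : P ++ [c] = z.take (t + 1) := by
      rw [List.prefix_iff_eq_take.mp hz]; simp [hPlen]
    refine Finset.mem_biUnion.mpr ⟨j, Finset.mem_filter.mpr
      ⟨Finset.mem_Icc.mpr ⟨by omega, hb.2.trans' hjb⟩, hlcp⟩, ?_⟩
    by_cases hQj : P ++ [c] <+: sufx T (SA j)
    · exact Finset.mem_insert_of_mem (Finset.mem_singleton.mpr (htake hQj))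
    · exact Finset.mem_insert.mpr (Or.inl (htake (by tauto)))
  have hPx := (List.prefix_append P [c]).trans hQx
  have hPm := (List.prefix_append P [c']).trans hQ'm
  rcases le_total x m with hxm | hmx
  · exact key x hx m hm hxm hPx hPm (by tauto)
  · exact key m hm x hx hmx hPm hPx (by tauto)

theorem SA_ne_one_of_L_eq
    (hdollar : ∀ i ∈ Finset.Icc 1 (n - 1), idx T i ≠ idx T n)
    (hSA_mem : ∀ i ∈ Finset.Icc 1 n, SA i ∈ Finset.Icc 1 n)
    (hSA_inj : Set.InjOn SA ↑(Finset.Icc 1 n))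
    (hLF : ∀ i ∈ Finset.Icc 1 n, SA i ≠ 1 → SA (LF i) = SA i - 1)
    (hLF1 : ∀ i ∈ Finset.Icc 1 n, SA i = 1 → SA (LF i) = n)
    (hL : ∀ i ∈ Finset.Icc 1 n, L i = idx T (SA (LF i)))
    {i j : ℕ} (hi : i ∈ Finset.Icc 1 n) (hj : j ∈ Finset.Icc 1 n) (hij : i ≠ j)
    (hLij : L i = L j) : SA i ≠ 1 := by
  intro h1
  have hj1 : SA j ≠ 1 := fun h => hij (hSA_inj hi hj (h1.trans h.symm))
  have hSAj := Finset.mem_Icc.mp (hSA_mem j hj)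
  apply hdollar (SA j - 1) (Finset.mem_Icc.mpr ⟨by omega, by omega⟩)
  rw [← hLF j hj hj1, ← hL j hj, ← hLij, hL i hi, hLF1 i hi h1]

theorem sufx_SA_LF (hlen : T.length = n)
    (hSA_mem : ∀ i ∈ Finset.Icc 1 n, SA i ∈ Finset.Icc 1 n)
    (hLF : ∀ i ∈ Finset.Icc 1 n, SA i ≠ 1 → SA (LF i) = SA i - 1)
    (hL : ∀ i ∈ Finset.Icc 1 n, L i = idx T (SA (LF i)))
    {i : ℕ} (hi : i ∈ Finset.Icc 1 n) (h1 : SA i ≠ 1) :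
    sufx T (SA (LF i)) = L i :: sufx T (SA i) := by
  have hSAi := Finset.mem_Icc.mp (hSA_mem i hi)
  rw [hL i hi, hLF i hi h1, sufx_eq_cons (by omega) (by omega), Nat.sub_add_cancel (by omega)]

theorem LF_pred_add_one (hlen : T.length = n)
    (hSA_mem : ∀ i ∈ Finset.Icc 1 n, SA i ∈ Finset.Icc 1 n)
    (hSA_surj : ∀ j ∈ Finset.Icc 1 n, ∃ i ∈ Finset.Icc 1 n, SA i = j)
    (hsorted : StrictMonoOn (fun i => sufx T (SA i)) ↑(Finset.Icc 1 n))
    (hLF_mem : ∀ i ∈ Finset.Icc 1 n, LF i ∈ Finset.Icc 1 n)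
    (hLF : ∀ i ∈ Finset.Icc 1 n, SA i ≠ 1 → SA (LF i) = SA i - 1)
    (hL : ∀ i ∈ Finset.Icc 1 n, L i = idx T (SA (LF i)))
    {i : ℕ} (hi : i ∈ Finset.Icc 2 n) (hLi : L i = L (i - 1))
    (h1 : SA i ≠ 1) (h1' : SA (i - 1) ≠ 1) : LF (i - 1) + 1 = LF i := by
  set s := fun i => sufx T (SA i)
  rw [Finset.mem_Icc] at hi
  have hiI : i ∈ Finset.Icc 1 n := Finset.mem_Icc.mpr ⟨by omega, hi.2⟩
  have hi1I : i - 1 ∈ Finset.Icc 1 n := Finset.mem_Icc.mpr ⟨by omega, by omega⟩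
  have hu : s (LF (i - 1)) = L i :: s (i - 1) := hLi ▸ sufx_SA_LF hlen hSA_mem hLF hL hi1I h1'
  have hv : s (LF i) = L i :: s i := sufx_SA_LF hlen hSA_mem hLF hL hiI h1
  have hlt : s (i - 1) < s i := hsorted hi1I hiI (by omega)
  have huv : LF (i - 1) < LF i := (hsorted.lt_iff_lt (hLF_mem _ hi1I) (hLF_mem _ hiI)).mp
    (by rw [hu, hv]; exact List.cons_lt_cons_iff.mpr (Or.inr ⟨rfl, hlt⟩))
  -- a row strictly between `LF (i - 1)` and `LF i` would, after dropping its first character,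
  -- give a suffix strictly between rows `i - 1` and `i`
  by_contra hne
  have hLFi := Finset.mem_Icc.mp (hLF_mem _ hiI)
  set m := LF (i - 1) + 1
  have hm : m ∈ Finset.Icc 1 n := Finset.mem_Icc.mpr ⟨by omega, by omega⟩
  have hum : s (LF (i - 1)) < s m := hsorted (hLF_mem _ hi1I) hm (by omega)
  have hmv : s m < s (LF i) := hsorted hm (hLF_mem _ hiI) (by omega)
  have hSAm := Finset.mem_Icc.mp (hSA_mem m hm)
  have hsm : s m = idx T (SA m) :: sufx T (SA m + 1) := sufx_eq_cons hSAm.1 (by omega)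
  rw [hu, hsm, List.cons_lt_cons_iff] at hum
  rw [hsm, hv, List.cons_lt_cons_iff] at hmv
  obtain ⟨hz1, hz2⟩ : s (i - 1) < sufx T (SA m + 1) ∧ sufx T (SA m + 1) < s i := by
    rcases hum with hum | ⟨he, hum⟩ <;> rcases hmv with hmv | ⟨he', hmv⟩
    · exact absurd (hum.trans hmv) (lt_irrefl _)
    · exact absurd he' hum.ne'
    · exact absurd he hmv.ne'
    · exact ⟨hum, hmv⟩
  rcases hSAm.2.eq_or_lt with hSAn | hSAn
  · rw [hSAn, sufx, Nat.add_sub_cancel, List.drop_eq_nil_of_le hlen.le] at hz1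
    exact List.not_lt_nil _ hz1
  obtain ⟨w, hw, hSAw⟩ := hSA_surj (SA m + 1) (Finset.mem_Icc.mpr ⟨by omega, by omega⟩)
  rw [← hSAw] at hz1 hz2
  have := (hsorted.lt_iff_lt hi1I hw).mp hz1
  have := (hsorted.lt_iff_lt hw hiI).mp hz2
  omega

theorem LF_step (hlen : T.length = n)
    (hdollar : ∀ i ∈ Finset.Icc 1 (n - 1), idx T i ≠ idx T n)
    (hSA_mem : ∀ i ∈ Finset.Icc 1 n, SA i ∈ Finset.Icc 1 n)
    (hSA_surj : ∀ j ∈ Finset.Icc 1 n, ∃ i ∈ Finset.Icc 1 n, SA i = j)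
    (hsorted : StrictMonoOn (fun i => sufx T (SA i)) ↑(Finset.Icc 1 n))
    (hLF_mem : ∀ i ∈ Finset.Icc 1 n, LF i ∈ Finset.Icc 1 n)
    (hLF : ∀ i ∈ Finset.Icc 1 n, SA i ≠ 1 → SA (LF i) = SA i - 1)
    (hLF1 : ∀ i ∈ Finset.Icc 1 n, SA i = 1 → SA (LF i) = n)
    (hL : ∀ i ∈ Finset.Icc 1 n, L i = idx T (SA (LF i)))
    {i : ℕ} (hi : i ∈ Finset.Icc 2 n) (hLi : L i = L (i - 1)) :
    LF i ∈ Finset.Icc 2 n ∧ SA (LF i) + 1 = SA i ∧ lcpArray T SA (LF i) = lcpArray T SA i + 1 := by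
  have hSA_inj : Set.InjOn SA ↑(Finset.Icc 1 n) := Set.InjOn.of_comp (g := sufx T) hsorted.injOn
  rw [Finset.mem_Icc] at hi
  have hiI : i ∈ Finset.Icc 1 n := Finset.mem_Icc.mpr ⟨by omega, hi.2⟩
  have hi1I : i - 1 ∈ Finset.Icc 1 n := Finset.mem_Icc.mpr ⟨by omega, by omega⟩
  have h1 := SA_ne_one_of_L_eq hdollar hSA_mem hSA_inj hLF hLF1 hL hiI hi1I (by omega) hLi
  have h1' := SA_ne_one_of_L_eq hdollar hSA_mem hSA_inj hLF hLF1 hL hi1I hiI (by omega)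
    hLi.symm
  have hpred := LF_pred_add_one hlen hSA_mem hSA_surj hsorted hLF_mem hLF hL
    (Finset.mem_Icc.mpr hi) hLi h1 h1'
  have hSAi := Finset.mem_Icc.mp (hSA_mem i hiI)
  have hLFi := Finset.mem_Icc.mp (hLF_mem i hiI)
  have hLFi1 := Finset.mem_Icc.mp (hLF_mem _ hi1I)
  refine ⟨Finset.mem_Icc.mpr ⟨by omega, hLFi.2⟩, by rw [hLF i hiI h1]; omega, ?_⟩
  rw [lcpArray, lcpArray, sufx_SA_LF hlen hSA_mem hLF hL hiI h1, ← hpred, Nat.add_sub_cancel,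
    sufx_SA_LF hlen hSA_mem hLF hL hi1I h1', hLi, lcpLen_cons_cons]

end SuffixArray

theorem stmt12_general
    (σ n : ℕ) (T : List ℕ)
    (hlen : T.length = n)
    (hdollar : ∀ i ∈ Finset.Icc 1 (n - 1), idx T i ≠ idx T n)
    (SA : ℕ → ℕ)
    (hSA_mem : ∀ i ∈ Finset.Icc 1 n, SA i ∈ Finset.Icc 1 n)
    (hSA_surj : ∀ j ∈ Finset.Icc 1 n, ∃ i ∈ Finset.Icc 1 n, SA i = j)
    (hSA_sorted : ∀ i j, i ∈ Finset.Icc 1 n → j ∈ Finset.Icc 1 n → i < j →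
      List.Lex (· < ·) (sufx T (SA i)) (sufx T (SA j)))
    (LF : ℕ → ℕ)
    (hLF_mem : ∀ i ∈ Finset.Icc 1 n, LF i ∈ Finset.Icc 1 n)
    (hLF : ∀ i ∈ Finset.Icc 1 n, SA i ≠ 1 → SA (LF i) = SA i - 1)
    (hLF1 : ∀ i ∈ Finset.Icc 1 n, SA i = 1 → SA (LF i) = n)
    (L : ℕ → ℕ)
    (hL : ∀ i ∈ Finset.Icc 1 n, L i = idx T (SA (LF i)))
 :
    ∀ t : ℕ, (KsetD σ t T).ncard ≤ 2 * (SstartSet n L).card := by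
  intro t
  have hsorted : StrictMonoOn (fun i => sufx T (SA i)) ↑(Finset.Icc 1 n) :=
    fun i hi j hj => hSA_sorted i j hi hj
  have hSA_inj : Set.InjOn SA ↑(Finset.Icc 2 n) :=
    (Set.InjOn.of_comp (g := sufx T) hsorted.injOn).mono
      (Finset.coe_subset.mpr (Finset.Icc_subset_Icc one_le_two le_rfl))
  calc (KsetD σ t T).ncard
      ≤ (((Finset.Icc 2 n).filter (lcpArray T SA · = t)).biUnion fun j =>
          {(sufx T (SA (j - 1))).take (t + 1), (sufx T (SA j)).take (t + 1)}).card := by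
        rw [← Set.ncard_coe_finset]
        exact Set.ncard_le_ncard (KsetD_subset_biUnion hlen hSA_surj hsorted t)
    _ ≤ 2 * ((Finset.Icc 2 n).filter (lcpArray T SA · = t)).card := by
        rw [mul_comm]
        exact Finset.card_biUnion_le_card_mul _ _ _ fun _ _ => Finset.card_le_two
    _ ≤ 2 * ((Finset.Icc 2 n).filter fun i => L i ≠ L (i - 1)).card := by
        exact Nat.mul_le_mul_left 2 (card_filter_eq_le_card_filter_halt hSA_inj (fun i hi hLi =>
          LF_step hlen hdollar hSA_mem hSA_surj hsorted hLF_mem hLF hLF1 hL hi (not_not.mp hLi)) t)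
    _ ≤ 2 * (SstartSet n L).card := by
        gcongr
        intro i hi
        obtain ⟨hi, hLi⟩ := Finset.mem_filter.mp hi
        rw [Finset.mem_Icc] at hi
        exact Finset.mem_filter.mpr ⟨Finset.mem_Icc.mpr ⟨by omega, hi.2⟩, Or.inr hLi⟩

theorem stmt12
    (σ n : ℕ) (T : List ℕ)
    (hn : 2 ≤ n) (hlen : T.length = n)
    (halpha : ∀ c ∈ T, c ∈ Finset.Icc 1 σ)
    (hocc : ∀ c ∈ Finset.Icc 1 σ, c ∈ T)
    (hdollar : ∀ i ∈ Finset.Icc 1 (n - 1), idx T i ≠ idx T n)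
    (SA : ℕ → ℕ)
    (hSA_mem : ∀ i ∈ Finset.Icc 1 n, SA i ∈ Finset.Icc 1 n)
    (hSA_surj : ∀ j ∈ Finset.Icc 1 n, ∃ i ∈ Finset.Icc 1 n, SA i = j)
    (hSA_sorted : ∀ i j, i ∈ Finset.Icc 1 n → j ∈ Finset.Icc 1 n → i < j →
      List.Lex (· < ·) (sufx T (SA i)) (sufx T (SA j)))
    (LF : ℕ → ℕ)
    (hLF_mem : ∀ i ∈ Finset.Icc 1 n, LF i ∈ Finset.Icc 1 n)
    (hLF : ∀ i ∈ Finset.Icc 1 n, SA i ≠ 1 → SA (LF i) = SA i - 1)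
    (hLF1 : ∀ i ∈ Finset.Icc 1 n, SA i = 1 → SA (LF i) = n)
    (L : ℕ → ℕ)
    (hL : ∀ i ∈ Finset.Icc 1 n, L i = idx T (SA (LF i)))
 :
    ∀ t : ℕ, (KsetD σ t T).ncard ≤ 2 * (SstartSet n L).card :=
  stmt12_general σ n T hlen hdollar SA hSA_mem hSA_surj hSA_sorted LF hLF_mem hLF hLF1 L hL
end
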